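/- arXiv:1307.3063 — 2 statements merged into one kernel-verified Lean document; each statement's English description precedes it below -/
import Mathlib

section
/- Let f : S^n → ℝ be twice continuously differentiable on the unit sphere S^n ⊂ ℝ^{n+1}. Then there exists a convex function F : ℝ^{n+1} → ℝ such that F restricted to S^n equals f. -/
/-!
Cut `f` off to a compactly supported `C²` function `g` that agrees with `f` on the sphere. Its
Hessian is bounded, say by `K`, so `g + (K / 2) ‖x‖²` has positive semidefinite Hessian and is
convex; on the sphere it differs from `f` by the constant `K / 2`.
-/

open Set Metric Topology
open scoped Manifold InnerProductSpace

theorem convexOn_univ_of_forall_add_smul {E : Type*} [AddCommGroup E] [Module ℝ E] {F : E → ℝ}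
    (h : ∀ x v : E, ConvexOn ℝ univ fun t : ℝ => F (x + t • v)) : ConvexOn ℝ univ F := by
  refine ⟨convex_univ, fun x _ y _ a b ha hb hab => ?_⟩
  have := (h x (y - x)).2 (mem_univ 0) (mem_univ 1) ha hb hab
  have hcomb : x + b • (y - x) = a • x + b • y := by
    obtain rfl : a = 1 - b := by linarith
    module
  simpa [hcomb] using this

theorem ContDiffOn.contDiff_smul_of_tsupport_subset {𝕜 E F : Type*} [NontriviallyNormedField 𝕜]
    [NormedAddCommGroup E] [NormedSpace 𝕜 E] [NormedAddCommGroup F] [NormedSpace 𝕜 F]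
    {n : WithTop ℕ∞} {χ : E → 𝕜} {f : E → F} {U : Set E} (hf : ContDiffOn 𝕜 n f U)
    (hU : IsOpen U) (hχ : ContDiff 𝕜 n χ) (hχU : tsupport χ ⊆ U) :
    ContDiff 𝕜 n fun x => χ x • f x := by
  refine contDiff_iff_contDiffAt.2 fun x => ?_
  by_cases hx : x ∈ U
  · exact hχ.contDiffAt.smul (hf.contDiffAt (hU.mem_nhds hx))
  · have hχx : χ =ᶠ[𝓝 x] 0 := notMem_tsupport_iff_eventuallyEq.1 fun h => hx (hχU h)
    refine (contDiffAt_const (c := (0 : F))).congr_of_eventuallyEq ?_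
    filter_upwards [hχx] with y hy
    simp [hy]

theorem IsCompact.exists_contDiff_tsupport_subset_eqOn_one {E : Type*} [NormedAddCommGroup E]
    [NormedSpace ℝ E] [FiniteDimensional ℝ E] {n : ℕ∞} {K U : Set E} (hK : IsCompact K)
    (hU : IsOpen U) (hKU : K ⊆ U) :
    ∃ χ : E → ℝ, ContDiff ℝ n χ ∧ HasCompactSupport χ ∧ tsupport χ ⊆ U ∧ EqOn χ 1 K := by
  obtain ⟨δ, hδ, hδU⟩ := hK.exists_cthickening_subset_open hU hKU
  obtain ⟨χ, hχ, -, hsupp, hone⟩ := exists_contMDiff_support_eq_eq_one_iff 𝓘(ℝ, E) (n := n)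
    isOpen_thickening hK.isClosed (self_subset_thickening hδ K)
  have htsupp : tsupport χ ⊆ cthickening δ K := by
    rw [tsupport, hsupp]; exact closure_thickening_subset_cthickening δ K
  exact ⟨χ, contMDiff_iff_contDiff.1 hχ,
    hK.cthickening.of_isClosed_subset (isClosed_tsupport χ) htsupp, htsupp.trans hδU,
    fun x hx => (hone x).1 hx⟩

theorem ContDiff.convexOn_univ_add_mul_norm_sq {E : Type*} [NormedAddCommGroup E]
    [InnerProductSpace ℝ E] {g : E → ℝ} (hg : ContDiff ℝ 2 g) {K : ℝ}
    (hK : ∀ x, ‖fderiv ℝ (fderiv ℝ g) x‖ ≤ K) :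
    ConvexOn ℝ univ fun x => g x + K / 2 * ‖x‖ ^ 2 := by
  refine convexOn_univ_of_forall_add_smul fun x v => ?_
  have hline : ∀ t : ℝ, HasDerivAt (fun s : ℝ => x + s • v) v t := fun t => by
    simpa using ((hasDerivAt_id t).smul_const v).const_add x
  have hg1 : Differentiable ℝ g := hg.differentiable (by norm_num)
  have hg2 : Differentiable ℝ (fderiv ℝ g) :=
    (hg.fderiv_right (m := 1) le_rfl).differentiable one_ne_zero
  have hd1 : ∀ t : ℝ, HasDerivAt (fun s => g (x + s • v) + K / 2 * ‖x + s • v‖ ^ 2)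
      (fderiv ℝ g (x + t • v) v + K * ⟪x + t • v, v⟫_ℝ) t := fun t => by
    refine (((hg1 _).hasFDerivAt.comp_hasDerivAt t (hline t)).add
      (((hline t).norm_sq).const_mul (K / 2))).congr_deriv ?_
    ring
  have hd2 : ∀ t : ℝ, HasDerivAt (fun s => fderiv ℝ g (x + s • v) v + K * ⟪x + s • v, v⟫_ℝ)
      (fderiv ℝ (fderiv ℝ g) (x + t • v) v v + K * ‖v‖ ^ 2) t := fun t => by
    refine ((((hg2 _).hasFDerivAt.comp_hasDerivAt t (hline t)).clm_apply
      (hasDerivAt_const t v)).add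
        (((hline t).inner ℝ (hasDerivAt_const t v)).const_mul K)).congr_deriv ?_
    simp
  refine convexOn_of_hasDerivWithinAt2_nonneg convex_univ
    (fun t _ => (hd1 t).continuousAt.continuousWithinAt) (fun t _ => (hd1 t).hasDerivWithinAt)
    (fun t _ => (hd2 t).hasDerivWithinAt) fun t _ => ?_
  have hle : |fderiv ℝ (fderiv ℝ g) (x + t • v) v v| ≤ K * ‖v‖ ^ 2 :=
    calc _ ≤ ‖fderiv ℝ (fderiv ℝ g) (x + t • v)‖ * ‖v‖ * ‖v‖ :=
          (fderiv ℝ (fderiv ℝ g) (x + t • v)).le_opNorm₂ v v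
      _ ≤ K * ‖v‖ * ‖v‖ := by gcongr; exact hK _
      _ = K * ‖v‖ ^ 2 := by ring
  linarith [neg_abs_le (fderiv ℝ (fderiv ℝ g) (x + t • v) v v)]

theorem exists_convexOn_eqOn_sphere {E : Type*} [NormedAddCommGroup E] [InnerProductSpace ℝ E]
    [FiniteDimensional ℝ E] {f : E → ℝ} {U : Set E} {r : ℝ} (hU : IsOpen U)
    (hrU : sphere (0 : E) r ⊆ U) (hf : ContDiffOn ℝ 2 f U) :
    ∃ F : E → ℝ, ConvexOn ℝ univ F ∧ EqOn F f (sphere 0 r) := by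
  obtain ⟨χ, hχ, hχc, hχU, hχ1⟩ :=
    (isCompact_sphere (0 : E) r).exists_contDiff_tsupport_subset_eqOn_one (n := 2) hU hrU
  have hg : ContDiff ℝ 2 fun x => χ x • f x :=
    hf.contDiff_smul_of_tsupport_subset hU hχ hχU
  have hgc : HasCompactSupport fun x => χ x • f x := hχc.smul_right
  obtain ⟨K, hK⟩ : ∃ K, ∀ x, ‖fderiv ℝ (fderiv ℝ fun x => χ x • f x) x‖ ≤ K :=
    Continuous.bounded_above_of_compact_support
      ((hg.fderiv_right (m := 1) le_rfl).continuous_fderiv one_ne_zero)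
      ((hgc.fderiv (𝕜 := ℝ)).fderiv (𝕜 := ℝ))
  refine ⟨fun x => χ x • f x + K / 2 * ‖x‖ ^ 2 + -(K / 2 * r ^ 2),
    (hg.convexOn_univ_add_mul_norm_sq hK).add_const _, fun x hx => ?_⟩
  simp [hχ1 hx, mem_sphere_zero_iff_norm.1 hx]

/-- A C² function on the unit sphere Sⁿ ⊂ ℝ^{n+1} admits a convex
extension F : ℝ^{n+1} → ℝ.  Twice continuous differentiability of `f` on the
sphere is formalized as: `f` is the restriction of a function that is C² on a
neighborhood of the sphere. -/
theorem convex_extension_of_sphere_C2 (n : ℕ)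
    (f : EuclideanSpace ℝ (Fin (n + 1)) → ℝ)
    (U : Set (EuclideanSpace ℝ (Fin (n + 1))))
    (hU : IsOpen U) (hUs : Metric.sphere (0 : EuclideanSpace ℝ (Fin (n + 1))) 1 ⊆ U)
    (hf : ContDiffOn ℝ 2 f U) :
    ∃ F : EuclideanSpace ℝ (Fin (n + 1)) → ℝ,
      ConvexOn ℝ Set.univ F ∧
      ∀ x ∈ Metric.sphere (0 : EuclideanSpace ℝ (Fin (n + 1))) 1, F x = f x :=
  exists_convexOn_eqOn_sphere hU hUs hf
end

section
/- Let 𝓔 be the 6-dimensional space of symmetric 3×3 real matrices with inner product ⟨A,B⟩ = tr(AB), and let K be the group of 3×3 signed permutation matrices acting on 𝓔 by A ↦ kᵀ A k. Then the space of symmetric bilinear forms H : 𝓔 × 𝓔 → ℝ satisfying H(kᵀÂk, kᵀεk) = H(Â, ε) for all k ∈ K is three-dimensional, spanned by H₁(Â,ε) = ⟨P_g Â, P_g ε⟩, H₂(Â,ε) = ⟨P_{D₀} Â, P_{D₀} ε⟩, H₃(Â,ε) = ⟨P_{D⊥} Â, P_{D⊥} ε⟩, where P_g, P_{D₀}, P_{D⊥}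 are the orthogonal projections onto the span of the identity, the traceless diagonal matrices, and the off-diagonal symmetric matrices, respectively. -/
open Matrix

/-- A 3×3 signed permutation matrix. -/
def IsSignedPerm (k : Matrix (Fin 3) (Fin 3) ℝ) : Prop :=
  ∃ (σ : Equiv.Perm (Fin 3)) (s : Fin 3 → ℝ),
    (∀ j, s j = 1 ∨ s j = -1) ∧ k = Matrix.of fun i j => if i = σ j then s j else 0

/-- Orthogonal projection of a 3×3 matrix onto the span of the identity. -/
noncomputable def Pg (A : Matrix (Fin 3) (Fin 3) ℝ) : Matrix (Fin 3) (Fin 3) ℝ :=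
  (A.trace / 3) • (1 : Matrix (Fin 3) (Fin 3) ℝ)

/-- Orthogonal projection onto the traceless diagonal matrices. -/
noncomputable def PD0 (A : Matrix (Fin 3) (Fin 3) ℝ) : Matrix (Fin 3) (Fin 3) ℝ :=
  Matrix.diagonal (fun i => A i i) - (A.trace / 3) • (1 : Matrix (Fin 3) (Fin 3) ℝ)

/-- Orthogonal projection onto the symmetric matrices with zero diagonal. -/
noncomputable def PDperp (A : Matrix (Fin 3) (Fin 3) ℝ) : Matrix (Fin 3) (Fin 3) ℝ :=
  A - Matrix.diagonal (fun i => A i i)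

/-- `H₁(Â,ε) = ⟨P_g Â, P_g ε⟩` with `⟨A,B⟩ = tr(AB)`. -/
noncomputable def H₁ (A B : Matrix (Fin 3) (Fin 3) ℝ) : ℝ := (Pg A * Pg B).trace

/-- `H₂(Â,ε) = ⟨P_{D₀} Â, P_{D₀} ε⟩`. -/
noncomputable def H₂ (A B : Matrix (Fin 3) (Fin 3) ℝ) : ℝ := (PD0 A * PD0 B).trace

/-- `H₃(Â,ε) = ⟨P_{D⊥} Â, P_{D⊥} ε⟩`. -/
noncomputable def H₃ (A B : Matrix (Fin 3) (Fin 3) ℝ) : ℝ := (PDperp A * PDperp B).trace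

/-! Write `S a b = E_ab + E_ba` (`symmUnit a b`); twice a symmetric matrix is
`∑ A a b • S a b`, so an invariant form `Q` is determined by the numbers `Q (S a b) (S c d)`.
Flipping the sign of the coordinate `m` multiplies such a number by `-1` for every occurrence of
`m` among `a, b, c, d`, so only the patterns `aaaa`, `aacc`, `abab`, `abba` survive, and
permuting coordinates makes each pattern a single constant. Hence `Q` is a combination of
`∑ Aᵢᵢ Bᵢᵢ`, `tr A tr B` and `tr (A B)`, and these three forms span the same space as
`H₁, H₂, H₃`. -/

open Matrix Finset

section SignedPerm

variable {ι : Type*} [Fintype ι] [DecidableEq ι]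

def signedPerm (σ : Equiv.Perm ι) (s : ι → ℝ) : Matrix ι ι ℝ :=
  of fun i j => if i = σ j then s j else 0

theorem signedPerm_conj_apply (σ : Equiv.Perm ι) (s : ι → ℝ) (A : Matrix ι ι ℝ) (i j : ι) :
    ((signedPerm σ s)ᵀ * A * signedPerm σ s) i j = s i * s j * A (σ i) (σ j) := by
  simp only [signedPerm, mul_apply, transpose_apply, of_apply, ite_mul, zero_mul, sum_ite_eq',
    mem_univ, ↓reduceIte, mul_ite, mul_zero]
  ring

variable {σ : Equiv.Perm ι} {s : ι → ℝ}

theorem signedPerm_conj_apply_self (hs : ∀ j, s j = 1 ∨ s j = -1) (A : Matrix ι ι ℝ) (i : ι) :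
    ((signedPerm σ s)ᵀ * A * signedPerm σ s) i i = A (σ i) (σ i) := by
  rw [signedPerm_conj_apply, mul_self_eq_one_iff.mpr (hs i), one_mul]

theorem transpose_signedPerm_mul_signedPerm (hs : ∀ j, s j = 1 ∨ s j = -1) :
    (signedPerm σ s)ᵀ * signedPerm σ s = 1 := by
  ext i j
  rw [← Matrix.mul_one (signedPerm σ s)ᵀ, signedPerm_conj_apply]
  by_cases h : i = j
  · subst h; simp [mul_self_eq_one_iff.mpr (hs i)]
  · simp [h]

theorem trace_signedPerm_conj (hs : ∀ j, s j = 1 ∨ s j = -1) (A : Matrix ι ι ℝ) :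
    ((signedPerm σ s)ᵀ * A * signedPerm σ s).trace = A.trace := by
  simp only [trace, Matrix.diag, signedPerm_conj_apply_self hs]
  exact Equiv.sum_comp σ fun i => A i i

theorem sum_diag_mul_diag_signedPerm_conj (hs : ∀ j, s j = 1 ∨ s j = -1) (A B : Matrix ι ι ℝ) :
    ∑ i, ((signedPerm σ s)ᵀ * A * signedPerm σ s) i i *
        ((signedPerm σ s)ᵀ * B * signedPerm σ s) i i = ∑ i, A i i * B i i := by
  simp only [signedPerm_conj_apply_self hs]
  exact Equiv.sum_comp σ fun i => A i i * B i i

theorem trace_mul_signedPerm_conj (hs : ∀ j, s j = 1 ∨ s j = -1) (A B : Matrix ι ι ℝ) :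
    ((signedPerm σ s)ᵀ * A * signedPerm σ s * ((signedPerm σ s)ᵀ * B * signedPerm σ s)).trace =
      (A * B).trace := by
  have hk := mul_eq_one_comm.mp (transpose_signedPerm_mul_signedPerm (σ := σ) hs)
  rw [← trace_signedPerm_conj hs (A * B)]
  simp only [Matrix.mul_assoc]
  rw [← Matrix.mul_assoc (signedPerm σ s) (signedPerm σ s)ᵀ, hk, Matrix.one_mul]

end SignedPerm

theorem exists_perm_apply_eq_and_apply_eq {ι : Type*} {i₀ i₁ a b : ι} (h₀₁ : i₀ ≠ i₁)
    (hab : a ≠ b) :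
    ∃ σ : Equiv.Perm ι, σ i₀ = a ∧ σ i₁ = b := by
  obtain ⟨σ, hσ⟩ := Equiv.Perm.exists_extending_pair ![i₀, i₁] ![a, b]
    (by simp [Function.Injective, Fin.forall_fin_two, h₀₁, h₀₁.symm])
    (by simp [Function.Injective, Fin.forall_fin_two, hab, hab.symm])
  exact ⟨σ, hσ 0, hσ 1⟩

section SymmUnit

variable {ι : Type*} [DecidableEq ι]

def symmUnit (a b : ι) : Matrix ι ι ℝ := single a b 1 + single b a 1

theorem symmUnit_comm (a b : ι) : symmUnit a b = symmUnit b a := add_comm _ _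

theorem isSymm_symmUnit (a b : ι) : (symmUnit a b).IsSymm := by
  simp [symmUnit, IsSymm, transpose_add, transpose_single, add_comm]

variable [Fintype ι]

theorem two_smul_eq_sum_symmUnit {A : Matrix ι ι ℝ} (hA : A.IsSymm) :
    (2 : ℝ) • A = ∑ a, ∑ b, A a b • symmUnit a b := by
  ext i j
  have hji := hA.apply i j
  simp only [Matrix.smul_apply, smul_eq_mul, symmUnit, smul_add, smul_single, mul_one,
    sum_add_distrib, Matrix.sum_apply, Matrix.add_apply, single_apply, ite_and, sum_ite_irrel,
    sum_ite_eq', mem_univ, ↓reduceIte, sum_const_zero, hji]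
  ring

theorem four_mul_apply_eq_sum_symmUnit (Q : LinearMap.BilinForm ℝ (Matrix ι ι ℝ))
    {A B : Matrix ι ι ℝ} (hA : A.IsSymm) (hB : B.IsSymm) :
    4 * Q A B = ∑ a, ∑ b, ∑ c, ∑ d, A a b * B c d * Q (symmUnit a b) (symmUnit c d) := by
  calc 4 * Q A B = Q ((2 : ℝ) • A) ((2 : ℝ) • B) := by
        simp only [map_smul, LinearMap.smul_apply, smul_eq_mul]
        ring
    _ = ∑ a, ∑ b, A a b * Q (symmUnit a b) ((2 : ℝ) • B) := by
        simp only [two_smul_eq_sum_symmUnit hA, LinearMap.map_sum₂, LinearMap.map_smul₂,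
          smul_eq_mul]
    _ = _ := by
        simp only [two_smul_eq_sum_symmUnit hB, map_sum, map_smul, smul_eq_mul, mul_sum, mul_assoc]

theorem signedPerm_conj_symmUnit (σ : Equiv.Perm ι) (s : ι → ℝ) (a b : ι) :
    (signedPerm σ s)ᵀ * symmUnit (σ a) (σ b) * signedPerm σ s = (s a * s b) • symmUnit a b := by
  ext i j
  rw [signedPerm_conj_apply]
  simp only [symmUnit, Matrix.add_apply, single_apply, σ.injective.eq_iff, Matrix.smul_apply,
    smul_eq_mul]
  split_ifs with h₁ h₂ h₂ <;> (try obtain ⟨rfl, rfl⟩ := h₁) <;> (try obtain ⟨rfl, rfl⟩ := h₂) <;>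
    ring

end SymmUnit

section Invariant

variable {ι : Type*} [Fintype ι] [DecidableEq ι]

theorem sum_mul_delta_eq (A B : Matrix ι ι ℝ) (x y z : ℝ) :
    ∑ a, ∑ b, ∑ c, ∑ d, A a b * B c d *
      (x * (if a = b ∧ b = c ∧ c = d then 1 else 0) + y * (if a = b ∧ c = d then 1 else 0) +
        z * ((if a = c ∧ b = d then 1 else 0) + (if a = d ∧ b = c then 1 else 0))) =
      x * ∑ a, A a a * B a a + y * (A.trace * B.trace) +
        z * ((A * Bᵀ).trace + (A * B).trace) := by
  simp only [trace, Matrix.diag, sum_mul_sum, mul_apply, transpose_apply]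
  simp only [ite_and, mul_ite, mul_one, mul_zero, mul_add, sum_add_distrib, sum_ite_irrel,
    sum_ite_eq, mem_univ, ↓reduceIte, sum_const_zero, mul_sum]
  simp only [mul_comm]

def IsSignedPermInvariant (Q : LinearMap.BilinForm ℝ (Matrix ι ι ℝ)) : Prop :=
  ∀ (σ : Equiv.Perm ι) (s : ι → ℝ), (∀ j, s j = 1 ∨ s j = -1) →
    ∀ A B : Matrix ι ι ℝ, A.IsSymm → B.IsSymm →
      Q ((signedPerm σ s)ᵀ * A * signedPerm σ s) ((signedPerm σ s)ᵀ * B * signedPerm σ s) = Q A B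

namespace IsSignedPermInvariant

variable {Q : LinearMap.BilinForm ℝ (Matrix ι ι ℝ)} (hQ : IsSignedPermInvariant Q)
include hQ

theorem apply_symmUnit_signedPerm {σ : Equiv.Perm ι} {s : ι → ℝ}
    (hs : ∀ j, s j = 1 ∨ s j = -1) (a b c d : ι) :
    Q (symmUnit (σ a) (σ b)) (symmUnit (σ c) (σ d)) =
      s a * s b * s c * s d * Q (symmUnit a b) (symmUnit c d) := by
  rw [← hQ σ s hs _ _ (isSymm_symmUnit _ _) (isSymm_symmUnit _ _), signedPerm_conj_symmUnit,
    signedPerm_conj_symmUnit]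
  simp only [map_smul, LinearMap.smul_apply, smul_eq_mul]
  ring

theorem apply_symmUnit_perm (σ : Equiv.Perm ι) (a b c d : ι) :
    Q (symmUnit (σ a) (σ b)) (symmUnit (σ c) (σ d)) = Q (symmUnit a b) (symmUnit c d) := by
  simpa using hQ.apply_symmUnit_signedPerm (s := 1) (fun _ => Or.inl rfl) a b c d

-- `hm` says that `m` occurs an odd number of times among `a, b, c, d`.
theorem apply_symmUnit_eq_zero {a b c d : ι} (m : ι)
    (hm : (Pi.mulSingle m (-1) : ι → ℝ) a * (Pi.mulSingle m (-1) : ι → ℝ) b *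
      (Pi.mulSingle m (-1) : ι → ℝ) c * (Pi.mulSingle m (-1) : ι → ℝ) d = -1) :
    Q (symmUnit a b) (symmUnit c d) = 0 := by
  have hs : ∀ j, (Pi.mulSingle m (-1) : ι → ℝ) j = 1 ∨ (Pi.mulSingle m (-1) : ι → ℝ) j = -1 := by
    intro j
    by_cases h : j = m <;> simp [h]
  have := hQ.apply_symmUnit_signedPerm (σ := 1) hs a b c d
  rw [hm] at this
  simp only [Equiv.Perm.coe_one, id_eq] at this
  linarith

theorem apply_symmUnit_eq_zero_of_unpaired {a b c d : ι}
    (h : ¬(a = b ∧ c = d) ∧ ¬(a = c ∧ b = d) ∧ ¬(a = d ∧ b = c)) :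
    Q (symmUnit a b) (symmUnit c d) = 0 := by
  obtain ⟨h₁, h₂, h₃⟩ := h
  by_cases hab : a = b
  · subst hab
    have hcd : c ≠ d := fun hcd => h₁ ⟨rfl, hcd⟩
    by_cases hac : a = c
    · subst hac
      exact hQ.apply_symmUnit_eq_zero d (by simp [hcd])
    · exact hQ.apply_symmUnit_eq_zero c (by simp [hcd, hac])
  · by_cases hac : a ≠ c ∧ a ≠ d
    · exact hQ.apply_symmUnit_eq_zero a (by simp [hac.1, hac.2, Ne.symm hab])
    · have hbc : b ≠ c ∧ b ≠ d := by
        constructor <;> rintro rfl <;> tauto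
      exact hQ.apply_symmUnit_eq_zero b (by simp [hab, hbc.1, hbc.2])

theorem exists_apply_symmUnit_eq [Nontrivial ι] :
    ∃ x y z : ℝ, ∀ a b c d : ι, Q (symmUnit a b) (symmUnit c d) =
      x * (if a = b ∧ b = c ∧ c = d then 1 else 0) + y * (if a = b ∧ c = d then 1 else 0) +
        z * ((if a = c ∧ b = d then 1 else 0) + (if a = d ∧ b = c then 1 else 0)) := by
  obtain ⟨i₀, i₁, h₀₁⟩ := exists_pair_ne ι
  have hdiag (a : ι) : Q (symmUnit a a) (symmUnit a a) = Q (symmUnit i₀ i₀) (symmUnit i₀ i₀) := by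
    simpa using hQ.apply_symmUnit_perm (Equiv.swap i₀ a) i₀ i₀ i₀ i₀
  refine ⟨Q (symmUnit i₀ i₀) (symmUnit i₀ i₀) - Q (symmUnit i₀ i₀) (symmUnit i₁ i₁) -
    2 * Q (symmUnit i₀ i₁) (symmUnit i₀ i₁), Q (symmUnit i₀ i₀) (symmUnit i₁ i₁),
    Q (symmUnit i₀ i₁) (symmUnit i₀ i₁), fun a b c d => ?_⟩
  by_cases hab : a = b
  · subst hab
    by_cases hcd : c = d
    · subst hcd
      by_cases hac : a = c
      · subst hac
        simp only [hdiag, and_self, ↓reduceIte, mul_one]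
        ring
      · obtain ⟨σ, rfl, rfl⟩ := exists_perm_apply_eq_and_apply_eq h₀₁ hac
        simp [hac, hQ.apply_symmUnit_perm]
    · rw [hQ.apply_symmUnit_eq_zero_of_unpaired (by grind)]
      grind
  · by_cases h₁ : a = c ∧ b = d
    · obtain ⟨rfl, rfl⟩ := h₁
      obtain ⟨σ, rfl, rfl⟩ := exists_perm_apply_eq_and_apply_eq h₀₁ hab
      simp [hab, hQ.apply_symmUnit_perm]
    by_cases h₂ : a = d ∧ b = c
    · obtain ⟨rfl, rfl⟩ := h₂
      obtain ⟨σ, rfl, rfl⟩ := exists_perm_apply_eq_and_apply_eq h₀₁ hab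
      simp [hab, symmUnit_comm (σ i₁), hQ.apply_symmUnit_perm]
    rw [hQ.apply_symmUnit_eq_zero_of_unpaired (by tauto)]
    simp [hab, h₁, h₂]

theorem exists_apply_eq [Nontrivial ι] :
    ∃ x y z : ℝ, ∀ A B : Matrix ι ι ℝ, A.IsSymm → B.IsSymm →
      Q A B = x * ∑ i, A i i * B i i + y * (A.trace * B.trace) + z * (A * B).trace := by
  obtain ⟨x, y, z, hxyz⟩ := hQ.exists_apply_symmUnit_eq
  refine ⟨x / 4, y / 4, z / 2, fun A B hA hB => ?_⟩
  have h4 := four_mul_apply_eq_sum_symmUnit Q hA hB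
  simp only [hxyz] at h4
  rw [sum_mul_delta_eq, hB.eq] at h4
  linarith

end IsSignedPermInvariant

end Invariant

theorem H₁_apply (A B : Matrix (Fin 3) (Fin 3) ℝ) : H₁ A B = A.trace * B.trace / 3 := by
  simp only [H₁, Pg, smul_mul_smul_comm, Matrix.mul_one, trace_smul, trace_one, Fintype.card_fin,
    smul_eq_mul]
  ring

theorem H₂_apply (A B : Matrix (Fin 3) (Fin 3) ℝ) :
    H₂ A B = ∑ i, A i i * B i i - A.trace * B.trace / 3 := by
  simp only [H₂, trace, PD0, diagonal, diag_apply, Fin.sum_univ_three, Fin.isValue, mul_apply,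
    Matrix.sub_apply, of_apply, Matrix.smul_apply, one_apply, smul_eq_mul, mul_ite, mul_one,
    mul_zero, ↓reduceIte, zero_ne_one, sub_self, one_ne_zero, add_zero, Fin.reduceEq, zero_add]
  ring

theorem H₃_apply (A B : Matrix (Fin 3) (Fin 3) ℝ) :
    H₃ A B = (A * B).trace - ∑ i, A i i * B i i := by
  simp only [H₃, trace, PDperp, diagonal, diag_apply, mul_apply, Matrix.sub_apply, of_apply,
    Fin.sum_univ_three, Fin.isValue, ↓reduceIte, sub_self, mul_zero, zero_ne_one, sub_zero,
    one_ne_zero, zero_add, Fin.reduceEq, add_zero]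
  ring

theorem IsSignedPerm.H_conj_eq {k : Matrix (Fin 3) (Fin 3) ℝ} (hk : IsSignedPerm k)
    (A B : Matrix (Fin 3) (Fin 3) ℝ) :
    H₁ (kᵀ * A * k) (kᵀ * B * k) = H₁ A B ∧ H₂ (kᵀ * A * k) (kᵀ * B * k) = H₂ A B ∧
      H₃ (kᵀ * A * k) (kᵀ * B * k) = H₃ A B := by
  obtain ⟨σ, s, hs, rfl⟩ : ∃ (σ : Equiv.Perm (Fin 3)) (s : Fin 3 → ℝ),
      (∀ j, s j = 1 ∨ s j = -1) ∧ k = signedPerm σ s := hk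
  simp only [H₁_apply, H₂_apply, H₃_apply, trace_signedPerm_conj hs,
    sum_diag_mul_diag_signedPerm_conj hs, trace_mul_signedPerm_conj hs, and_self]

theorem H_linearIndependent {c₁ c₂ c₃ : ℝ}
    (h : ∀ A B : Matrix (Fin 3) (Fin 3) ℝ, A.IsSymm → B.IsSymm →
      c₁ * H₁ A B + c₂ * H₂ A B + c₃ * H₃ A B = 0) :
    c₁ = 0 ∧ c₂ = 0 ∧ c₃ = 0 := by
  have h₁ : c₁ = 0 := by
    simpa [H₁_apply, H₂_apply, H₃_apply, trace_fin_three] using h 1 1 isSymm_one isSymm_one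
  have h₃ : c₃ = 0 := by
    simpa [H₁_apply, H₂_apply, H₃_apply, trace_fin_three, symmUnit, mul_apply, Fin.sum_univ_three,
      single_apply] using
      h (symmUnit 0 1) (symmUnit 0 1) (isSymm_symmUnit 0 1) (isSymm_symmUnit 0 1)
  have h₂ : c₂ = 0 := by
    have := h (symmUnit 0 0) (symmUnit 0 0) (isSymm_symmUnit 0 0) (isSymm_symmUnit 0 0)
    norm_num [h₁, h₃, H₂_apply, trace_fin_three, symmUnit, Fin.sum_univ_three, single_apply,
      Fin.ext_iff] at this
    exact this
  exact ⟨h₁, h₂, h₃⟩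

/-- the space of `K`-invariant symmetric bilinear forms on the
6-dimensional space `𝓔` of symmetric 3×3 matrices is 3-dimensional, spanned by
`H₁, H₂, H₃`: each `Hᵢ` is `K`-invariant, they are linearly independent (as
forms on `𝓔`), and every `K`-invariant symmetric bilinear form on `𝓔` is a
linear combination of them. -/
theorem invariant_bilinear_forms_on_E :
    -- each `Hᵢ` is symmetric and `K`-invariant on `𝓔`
    (∀ H ∈ [H₁, H₂, H₃], ∀ k, IsSignedPerm k →
      ∀ A B : Matrix (Fin 3) (Fin 3) ℝ, A.IsSymm → B.IsSymm →
        H (kᵀ * A * k) (kᵀ * B * k) = H A B ∧ H A B = H B A) ∧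
    -- linear independence of `H₁, H₂, H₃` as forms on `𝓔`
    (∀ c₁ c₂ c₃ : ℝ,
      (∀ A B : Matrix (Fin 3) (Fin 3) ℝ, A.IsSymm → B.IsSymm →
        c₁ * H₁ A B + c₂ * H₂ A B + c₃ * H₃ A B = 0) →
      c₁ = 0 ∧ c₂ = 0 ∧ c₃ = 0) ∧
    -- every invariant symmetric bilinear form on `𝓔` is a combination
    (∀ H : Matrix (Fin 3) (Fin 3) ℝ → Matrix (Fin 3) (Fin 3) ℝ → ℝ,
      (∀ A B C : Matrix (Fin 3) (Fin 3) ℝ, H (A + B) C = H A C + H B C) →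
      (∀ (t : ℝ) (A B : Matrix (Fin 3) (Fin 3) ℝ), H (t • A) B = t * H A B) →
      (∀ A B : Matrix (Fin 3) (Fin 3) ℝ, H A B = H B A) →
      (∀ k, IsSignedPerm k →
        ∀ A B : Matrix (Fin 3) (Fin 3) ℝ, A.IsSymm → B.IsSymm →
          H (kᵀ * A * k) (kᵀ * B * k) = H A B) →
      ∃ c₁ c₂ c₃ : ℝ, ∀ A B : Matrix (Fin 3) (Fin 3) ℝ, A.IsSymm → B.IsSymm →
        H A B = c₁ * H₁ A B + c₂ * H₂ A B + c₃ * H₃ A B) := by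
  refine ⟨?_, fun c₁ c₂ c₃ => H_linearIndependent, ?_⟩
  · intro H hH k hk A B _ _
    simp only [List.mem_cons, List.not_mem_nil, or_false] at hH
    obtain ⟨h₁, h₂, h₃⟩ := hk.H_conj_eq A B
    rcases hH with rfl | rfl | rfl
    exacts [⟨h₁, trace_mul_comm _ _⟩, ⟨h₂, trace_mul_comm _ _⟩, ⟨h₃, trace_mul_comm _ _⟩]
  · intro H hadd hsmul hsymm hinv
    let Q : LinearMap.BilinForm ℝ (Matrix (Fin 3) (Fin 3) ℝ) := LinearMap.mk₂ ℝ H hadd hsmul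
      (fun A B C => by rw [hsymm, hadd, hsymm B, hsymm C])
      (fun t A B => by rw [hsymm, hsmul, hsymm B, smul_eq_mul])
    have hQ : IsSignedPermInvariant Q := fun σ s hs => hinv _ ⟨σ, s, hs, rfl⟩
    obtain ⟨x, y, z, hxyz⟩ := hQ.exists_apply_eq
    refine ⟨x + 3 * y + z, x + z, z, fun A B hA hB => ?_⟩
    rw [show H A B = Q A B from rfl, hxyz A B hA hB, H₁_apply, H₂_apply, H₃_apply]
    ring
end
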